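/- arXiv:math/9411209 — 3 statements merged into one kernel-verified Lean document; each statement's English description precedes it below -/
import Mathlib

section
/- Let F ⊆ R[X]. Every chain of one-step s-reductions via F must terminate; that is, there is no infinite sequence g_0, g_1, g_2, … in R[X] such that g_j s-reduces to g_{j+1} via F in one step for every j. Consequently every g ∈ R[X] has a final s-reductum via F (an element obtained from g by a finite chain of one-step s-reductions that cannot be further s-reduced via F). -/
open MvPolynomial

/-- A term order on the monomials (exponent vectors) of a polynomial ring in `n`
variables: a well-founded linear order compatible with multiplication of power
products (i.e. with addition of exponent vectors). -/
structure TermOrder (n : ℕ) where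
  lo : LinearOrder (Fin n →₀ ℕ)
  wf : WellFounded lo.lt
  add_le_add : ∀ a b c : Fin n →₀ ℕ, lo.le a b → lo.le (a + c) (b + c)

namespace TermOrder

variable {n : ℕ} {R : Type*} [CommRing R]

/-- `lp p`: the leading power product (exponent vector) of `p`; junk value `0`
for the zero polynomial. -/
noncomputable def lp (ord : TermOrder n) (p : MvPolynomial (Fin n) R) : Fin n →₀ ℕ :=
  WithBot.unbotD 0 (@Finset.max _ ord.lo p.support)

/-- `lc p`: the leading coefficient of `p` (0 if `p = 0`). -/
noncomputable def lc (ord : TermOrder n) (p : MvPolynomial (Fin n) R) : R :=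
  p.coeff (ord.lp p)

/-- `ltm p`: the leading term `lc(p)·lp(p)` of `p` (0 if `p = 0`). -/
noncomputable def ltm (ord : TermOrder n) (p : MvPolynomial (Fin n) R) : MvPolynomial (Fin n) R :=
  monomial (ord.lp p) (ord.lc p)

end TermOrder

variable {n : ℕ} {R : Type*} [CommRing R]

/-- An `F`-power product: a finite product `∏ fᵢ^{eᵢ}` with `fᵢ ∈ F`. -/
def IsPowerProduct (F : Set (MvPolynomial (Fin n) R)) (q : MvPolynomial (Fin n) R) : Prop :=
  ∃ e : MvPolynomial (Fin n) R →₀ ℕ, (e.support : Set (MvPolynomial (Fin n) R)) ⊆ F ∧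
    q = e.prod (fun f k => f ^ k)

/-- `F` is a SAGBI basis for the `R`-subalgebra `A`: `R[Lt A] = R[Lt F]`. -/
def IsSAGBI (ord : TermOrder n) (A : Subalgebra R (MvPolynomial (Fin n) R))
    (F : Set (MvPolynomial (Fin n) R)) : Prop :=
  Algebra.adjoin R (ord.ltm '' (A : Set (MvPolynomial (Fin n) R))) =
    Algebra.adjoin R (ord.ltm '' F)

/-- One step of s-reduction of `g` to `h` via `F`. -/
def SStep (ord : TermOrder n) (F : Set (MvPolynomial (Fin n) R))
    (g h : MvPolynomial (Fin n) R) : Prop :=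
  ∃ (β : Fin n →₀ ℕ) (N : ℕ) (q : Fin N → MvPolynomial (Fin n) R) (r : Fin N → R),
    g.coeff β ≠ 0 ∧
    (∀ i, IsPowerProduct F (q i) ∧ q i ≠ 0 ∧ ord.lp (q i) = β) ∧
    g.coeff β = ∑ i, r i * ord.lc (q i) ∧
    h = g - ∑ i, C (r i) * q i

/-- `g` s-reduces to `h` via `F`: a finite chain of one-step s-reductions. -/
def SReduce (ord : TermOrder n) (F : Set (MvPolynomial (Fin n) R)) :
    MvPolynomial (Fin n) R → MvPolynomial (Fin n) R → Prop :=
  Relation.ReflTransGen (SStep ord F)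

/-- One step of si-reduction of `h` to `h'` via `G`, relative to the subalgebra `A`. -/
def SiStep (ord : TermOrder n) (A : Subalgebra R (MvPolynomial (Fin n) R))
    (G : Set (MvPolynomial (Fin n) R)) (h h' : MvPolynomial (Fin n) R) : Prop :=
  ∃ (α : Fin n →₀ ℕ) (M : ℕ) (g a : Fin M → MvPolynomial (Fin n) R),
    h.coeff α ≠ 0 ∧
    (∀ i, g i ∈ G) ∧ (∀ i, a i ∈ A) ∧
    (∀ i, a i * g i ≠ 0 ∧ ord.lp (a i * g i) = α) ∧
    (monomial α (h.coeff α) : MvPolynomial (Fin n) R) = ∑ i, ord.ltm (a i * g i) ∧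
    h' = h - ∑ i, a i * g i

/-- `h` si-reduces to `h'` via `G`: a finite chain of one-step si-reductions. -/
def SiReduce (ord : TermOrder n) (A : Subalgebra R (MvPolynomial (Fin n) R))
    (G : Set (MvPolynomial (Fin n) R)) :
    MvPolynomial (Fin n) R → MvPolynomial (Fin n) R → Prop :=
  Relation.ReflTransGen (SiStep ord A G)

/-- The subalgebra `R[Lt A]` generated by the leading terms of elements of `A`. -/
noncomputable def LtAlg (ord : TermOrder n) (A : Subalgebra R (MvPolynomial (Fin n) R)) :
    Subalgebra R (MvPolynomial (Fin n) R) :=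
  Algebra.adjoin R (ord.ltm '' (A : Set (MvPolynomial (Fin n) R)))

/-- The leading term of an element of `A`, as an element of `R[Lt A]`. -/
noncomputable def ltA (ord : TermOrder n) (A : Subalgebra R (MvPolynomial (Fin n) R))
    (a : A) : LtAlg ord A :=
  ⟨ord.ltm (a : MvPolynomial (Fin n) R), Algebra.subset_adjoin ⟨a, a.2, rfl⟩⟩

/-- `G ⊆ I` is a SAGBI–Gröbner basis (SG-basis) for the ideal `I` of `A`:
`Lt G` generates the ideal `⟨Lt I⟩` in the subalgebra `R[Lt A]`. -/
def IsSGBasis (ord : TermOrder n) (A : Subalgebra R (MvPolynomial (Fin n) R))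
    (I : Ideal A) (G : Set A) : Prop :=
  Ideal.span
      ((Subtype.val ⁻¹' (ord.ltm '' (Subtype.val '' G)) : Set (LtAlg ord A))) =
  Ideal.span
      ((Subtype.val ⁻¹' (ord.ltm '' (Subtype.val '' (I : Set A))) : Set (LtAlg ord A)))

/-!
A one-step s-reduction cancels the coefficient of `g` at some power product `X^β` and, since every
`F`-power product used has leading power product `X^β`, leaves the coefficients above `X^β`
unchanged. So the support of `g` strictly decreases in the colexicographic order on finite sets of
power products induced by the term order, and that order is well-founded because the term order
is (compare supports as multisets in the Dershowitz–Manna order).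
-/

theorem Finset.val_eq_inter_add_sdiff {α : Type*} [DecidableEq α] (s t : Finset α) :
    s.val = (s ∩ t).val + (s \ t).val := by
  rw [← disjUnion_val _ _ (disjoint_sdiff_inter s t).symm, disjUnion_eq_union, union_comm,
    sdiff_union_inter]

open Finset Colex in
instance Finset.Colex.instWellFoundedLT {α : Type*} [LinearOrder α] [WellFoundedLT α] :
    WellFoundedLT (Colex (Finset α)) := by
  refine ⟨Subrelation.wf (fun {s t} hst => ?_)
    (InvImage.wf (fun s : Colex (Finset α) => (ofColex s).val)
      Multiset.wellFounded_isDershowitzMannaLT)⟩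
  obtain ⟨a, hat, has, hlt⟩ := lt_iff_exists_forall_lt.1 hst
  refine ⟨(ofColex s ∩ ofColex t).val, (ofColex s \ ofColex t).val,
    (ofColex t \ ofColex s).val, ?_, val_eq_inter_add_sdiff _ _, ?_, fun b hb => ?_⟩
  · rw [Ne, Multiset.empty_eq_zero, val_eq_zero, ← Ne, ← nonempty_iff_ne_empty]
    exact ⟨a, mem_sdiff.2 ⟨hat, has⟩⟩
  · rw [inter_comm, ← val_eq_inter_add_sdiff]
  · rw [mem_val, mem_sdiff] at hb
    exact ⟨a, mem_sdiff.2 ⟨hat, has⟩, hlt b hb.1 hb.2⟩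

theorem WellFounded.exists_reflTransGen_forall_not_rel {α : Type*} {r : α → α → Prop}
    (h : WellFounded (flip r)) (a : α) : ∃ b, Relation.ReflTransGen r a b ∧ ∀ c, ¬ r b c := by
  obtain ⟨b, hab, hmin⟩ := h.has_min {b | Relation.ReflTransGen r a b} ⟨a, .refl⟩
  exact ⟨b, hab, fun c hbc => hmin c (hab.tail hbc) hbc⟩

namespace TermOrder

/-- `Fin n →₀ ℕ` ordered by `ord` instead of pointwise. -/
def PowerProduct (_ : TermOrder n) : Type := Fin n →₀ ℕ

instance (ord : TermOrder n) : LinearOrder ord.PowerProduct := ord.lo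

instance (ord : TermOrder n) : WellFoundedLT ord.PowerProduct := ⟨ord.wf⟩

noncomputable def support (ord : TermOrder n) (p : MvPolynomial (Fin n) R) :
    Finset ord.PowerProduct :=
  p.support

theorem coeff_eq_zero_of_lp_lt (ord : TermOrder n) {p : MvPolynomial (Fin n) R}
    {γ : Fin n →₀ ℕ} (h : ord.lo.lt (ord.lp p) γ) : p.coeff γ = 0 := by
  by_contra hγ
  have hmem : γ ∈ ord.support p := mem_support_iff.2 hγ
  obtain ⟨m, hm⟩ := Finset.max_of_mem (α := ord.PowerProduct) hmem
  have hlp : ord.lp p = m := by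
    change WithBot.unbotD (0 : Fin n →₀ ℕ) (ord.support p).max = m
    rw [hm]
    rfl
  exact not_lt_of_ge (α := ord.PowerProduct) (Finset.le_max_of_eq hmem hm) (hlp ▸ h)

end TermOrder

theorem SStep.exists_coeff_ne_zero_eq_zero {ord : TermOrder n} {F : Set (MvPolynomial (Fin n) R)}
    {g h : MvPolynomial (Fin n) R} (hs : SStep ord F g h) :
    ∃ β, g.coeff β ≠ 0 ∧ h.coeff β = 0 ∧ ∀ γ, ord.lo.lt β γ → h.coeff γ = g.coeff γ := by
  obtain ⟨β, N, q, r, hgβ, hq, hsum, rfl⟩ := hs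
  have hcoeff (γ : Fin n →₀ ℕ) :
      (g - ∑ i, C (r i) * q i).coeff γ = g.coeff γ - ∑ i, r i * (q i).coeff γ := by
    simp only [coeff_sub, coeff_sum, coeff_C_mul]
  refine ⟨β, hgβ, ?_, fun γ hγ => ?_⟩
  · have hlc (i : Fin N) : (q i).coeff β = ord.lc (q i) := by rw [← (hq i).2.2]; rfl
    simp only [hcoeff, hlc, ← hsum, sub_self]
  · have hzero (i : Fin N) : (q i).coeff γ = 0 :=
      ord.coeff_eq_zero_of_lp_lt ((hq i).2.2 ▸ hγ)
    simp only [hcoeff, hzero, mul_zero, Finset.sum_const_zero, sub_zero]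

theorem SStep.support_lt {ord : TermOrder n} {F : Set (MvPolynomial (Fin n) R)}
    {g h : MvPolynomial (Fin n) R} (hs : SStep ord F g h) :
    toColex (ord.support h) < toColex (ord.support g) := by
  obtain ⟨β, hgβ, hhβ, habove⟩ := hs.exists_coeff_ne_zero_eq_zero
  refine Finset.Colex.toColex_lt_toColex_iff_exists_forall_lt.2
    ⟨β, mem_support_iff.2 hgβ, notMem_support_iff.2 hhβ, fun γ hγh hγg => ?_⟩
  refine lt_of_not_ge fun hβγ => ?_
  rcases hβγ.lt_or_eq with hlt | rfl
  · exact hγg (mem_support_iff.2 (habove γ hlt ▸ mem_support_iff.1 hγh))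
  · exact mem_support_iff.1 hγh hhβ

theorem SStep.wellFounded_flip (ord : TermOrder n) (F : Set (MvPolynomial (Fin n) R)) :
    WellFounded (flip (SStep ord F)) :=
  Subrelation.wf SStep.support_lt (InvImage.wf (toColex ∘ ord.support) wellFounded_lt)

theorem sreduce_terminates_general {n : ℕ} {R : Type*} [CommRing R]
    (ord : TermOrder n) (F : Set (MvPolynomial (Fin n) R)) :
    (¬ ∃ seq : ℕ → MvPolynomial (Fin n) R, ∀ j, SStep ord F (seq j) (seq (j + 1))) ∧
    (∀ g : MvPolynomial (Fin n) R, ∃ h : MvPolynomial (Fin n) R,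
      SReduce ord F g h ∧ ∀ h' : MvPolynomial (Fin n) R, ¬ SStep ord F h h') := by
  have : IsWellFounded _ (flip (SStep ord F)) := ⟨SStep.wellFounded_flip ord F⟩
  refine ⟨fun ⟨seq, hseq⟩ => ?_, IsWellFounded.wf.exists_reflTransGen_forall_not_rel⟩
  obtain ⟨j, hj⟩ := WellFounded.not_rel_apply_succ (r := flip (SStep ord F)) seq
  exact hj (hseq j)

/-- every chain of one-step s-reductions via `F` terminates, and
consequently every `g` has a final s-reductum via `F`. -/
theorem sreduce_terminates {n : ℕ} {R : Type*} [CommRing R] [IsDomain R]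
    [IsNoetherianRing R] (ord : TermOrder n) (F : Set (MvPolynomial (Fin n) R)) :
    (¬ ∃ seq : ℕ → MvPolynomial (Fin n) R, ∀ j, SStep ord F (seq j) (seq (j + 1))) ∧
    (∀ g : MvPolynomial (Fin n) R, ∃ h : MvPolynomial (Fin n) R,
      SReduce ord F g h ∧ ∀ h' : MvPolynomial (Fin n) R, ¬ SStep ord F h h') :=
  sreduce_terminates_general ord F
end

section
/- Let F ⊆ A. Then F is a SAGBI basis for A if and only if for every nonzero a ∈ A, every final s-reductum of a via F is 0. -/
open MvPolynomial

variable {n : ℕ} {R : Type*} [CommRing R]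

/-!
An s-reduction step cancels one term of a polynomial and changes it only below that term, so
s-reduction terminates, and it stays inside `A` because `F ⊆ A`. If `F` is a SAGBI basis, the
leading term of a nonzero final s-reductum lies in `R[Lt A] = R[Lt F]`; over a domain `R[Lt F]` is
spanned by the leading terms of `F`-power products, so that leading term is a combination of leading
terms of `F`-power products with the same power product, i.e. the s-reductum is still reducible.
Conversely, along an s-reduction of `a ≠ 0` to `0` the leading term of `a` is untouched until some
step cancels it, and that step writes `lt a` as a combination of leading terms of `F`-power
products, so `lt a ∈ R[Lt F]`.
-/

noncomputable section

namespace TermOrder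

variable (ord : TermOrder n)

/-- `Fin n →₀ ℕ` already carries the pointwise order as an instance; this synonym carries
`ord.lo` instead. -/
def Monomial (_ord : TermOrder n) : Type := Fin n →₀ ℕ

instance : AddCommMonoid ord.Monomial := inferInstanceAs (AddCommMonoid (Fin n →₀ ℕ))

instance : IsCancelAdd ord.Monomial := inferInstanceAs (IsCancelAdd (Fin n →₀ ℕ))

instance : LinearOrder ord.Monomial := ord.lo

instance : IsOrderedAddMonoid ord.Monomial where
  add_le_add_left a b h c := ord.add_le_add a b c h

instance : WellFoundedLT ord.Monomial := ⟨ord.wf⟩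

def toMonomial : (Fin n →₀ ℕ) ≃+ ord.Monomial := AddEquiv.refl (Fin n →₀ ℕ)

theorem toMonomial_le_iff {a b : Fin n →₀ ℕ} :
    ord.toMonomial a ≤ ord.toMonomial b ↔ ord.lo.le a b := Iff.rfl

/-- The multiples of a monomial below `1` would form an infinite descending chain. -/
theorem zero_le_toMonomial (a : Fin n →₀ ℕ) : 0 ≤ ord.toMonomial a := by
  by_contra! ha
  refine not_strictAnti_of_wellFoundedLT (fun k : ℕ => k • ord.toMonomial a)
    (strictAnti_nat_of_succ_lt fun k => ?_)
  simpa [succ_nsmul] using add_lt_add_left ha (k • ord.toMonomial a)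

def toMonomialOrder : MonomialOrder (Fin n) where
  syn := ord.Monomial
  toSyn := ord.toMonomial
  toSyn_monotone a b hab := by
    obtain ⟨c, rfl⟩ := exists_add_of_le hab
    simpa [map_add] using add_le_add_left (ord.zero_le_toMonomial c) (ord.toMonomial a)

theorem lp_eq_degree (p : MvPolynomial (Fin n) R) :
    ord.lp p = ord.toMonomialOrder.degree p := by
  rcases eq_or_ne p 0 with rfl | hp
  · simp [lp]
  let := ord.lo
  obtain ⟨d, hd⟩ := Finset.max_of_nonempty (support_nonempty.mpr hp)
  have hlp : ord.lp p = d := by rw [lp, hd]; rfl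
  rw [hlp]
  refine ord.toMonomialOrder.toSyn.injective (le_antisymm ?_ ?_)
  · exact ord.toMonomialOrder.le_degree_of_mem_support (Finset.mem_of_max hd)
  · exact ord.toMonomial_le_iff.mpr
      (Finset.le_max_of_eq (ord.toMonomialOrder.degree_mem_support hp) hd)

theorem lc_eq_leadingCoeff (p : MvPolynomial (Fin n) R) :
    ord.lc p = ord.toMonomialOrder.leadingCoeff p := by
  rw [lc, lp_eq_degree, MonomialOrder.leadingCoeff]

theorem ltm_eq_leadingTerm : ord.ltm = ord.toMonomialOrder.leadingTerm (R := R) := by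
  ext1 p
  rw [ltm, lp_eq_degree, lc_eq_leadingCoeff, MonomialOrder.leadingTerm]

theorem ltm_eq_zero_iff {p : MvPolynomial (Fin n) R} : ord.ltm p = 0 ↔ p = 0 := by
  rw [ltm_eq_leadingTerm, MonomialOrder.leadingTerm_eq_zero_iff]

end TermOrder

namespace MonomialOrder

variable {σ R : Type*} [CommSemiring R] (m : MonomialOrder σ)

def leadingTermHom [NoZeroDivisors R] : MvPolynomial σ R →* MvPolynomial σ R where
  toFun := m.leadingTerm
  map_one' := by simpa using m.leadingTerm_C (1 : R)
  map_mul' := m.leadingTerm_mul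

theorem adjoin_leadingTerm_eq_span [NoZeroDivisors R] (F : Set (MvPolynomial σ R)) :
    Subalgebra.toSubmodule (Algebra.adjoin R (m.leadingTerm '' F)) =
      Submodule.span R (m.leadingTerm '' Submonoid.closure F) := by
  rw [Algebra.adjoin_eq_span]
  change Submodule.span R (Submonoid.closure (m.leadingTermHom '' F) : Set _) =
    Submodule.span R (m.leadingTermHom '' (Submonoid.closure F : Set (MvPolynomial σ R)))
  rw [← MonoidHom.map_mclosure, Submonoid.coe_map]

theorem exists_of_monomial_mem_span_leadingTerm {S : Set (MvPolynomial σ R)} {β : σ →₀ ℕ}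
    {c : R} (h : monomial β c ∈ Submodule.span R (m.leadingTerm '' S)) :
    ∃ (N : ℕ) (q : Fin N → MvPolynomial σ R) (r : Fin N → R),
      (∀ i, q i ∈ S ∧ q i ≠ 0 ∧ m.degree (q i) = β) ∧
        c = ∑ i, r i * m.leadingCoeff (q i) := by
  classical
  -- Projecting onto the `β`-component keeps exactly the leading terms of degree `β`.
  let π : MvPolynomial σ R →ₗ[R] MvPolynomial σ R := (monomial β).comp (lcoeff R β)
  have hβ : monomial β c ∈
      Submodule.span R (m.leadingTerm '' {q ∈ S | q ≠ 0 ∧ m.degree q = β}) := by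
    have hπ := Submodule.mem_map_of_mem (f := π) h
    rw [Submodule.map_span] at hπ
    have hπc : π (monomial β c) = monomial β c := by simp [π]
    refine Submodule.span_le.mpr ?_ (hπc ▸ hπ)
    rintro _ ⟨_, ⟨q, hq, rfl⟩, rfl⟩
    by_cases hqβ : q ≠ 0 ∧ m.degree q = β
    · exact Submodule.subset_span ⟨q, ⟨hq, hqβ⟩, by simp [π, leadingTerm, hqβ.2]⟩
    · suffices π (m.leadingTerm q) = 0 by rw [this]; exact Submodule.zero_mem _
      rcases eq_or_ne q 0 with rfl | hq0
      · simp
      · simp [π, leadingTerm, coeff_monomial, not_and.mp hqβ hq0]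
  obtain ⟨N, r, g, hg⟩ := Submodule.mem_span_set'.mp hβ
  choose q hq hqg using fun i => (g i).2
  refine ⟨N, q, r, hq, ?_⟩
  calc c = coeff β (monomial β c) := by rw [coeff_monomial, if_pos rfl]
    _ = ∑ i, r i * m.leadingCoeff (q i) := by
      rw [← hg, coeff_sum]
      refine Finset.sum_congr rfl fun i _ => ?_
      rw [coeff_smul, ← hqg, leadingTerm, (hq i).2.2, coeff_monomial, if_pos rfl, smul_eq_mul]

theorem degree_sum_C_mul_le {N : ℕ} {q : Fin N → MvPolynomial σ R} {β : σ →₀ ℕ}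
    (hq : ∀ i, m.degree (q i) = β) (r : Fin N → R) :
    m.degree (∑ i, C (r i) * q i) ≼[m] β := by
  refine m.degree_sum_le.trans (Finset.sup_le fun i _ => ?_)
  rw [← smul_eq_C_mul, ← hq i]
  exact m.degree_smul_le

theorem coeff_sum_C_mul_of_degree_eq {N : ℕ} {q : Fin N → MvPolynomial σ R}
    {β : σ →₀ ℕ} (hq : ∀ i, m.degree (q i) = β) (r : Fin N → R) :
    coeff β (∑ i, C (r i) * q i) = ∑ i, r i * m.leadingCoeff (q i) := by
  rw [coeff_sum]
  exact Finset.sum_congr rfl fun i _ => by rw [coeff_C_mul, leadingCoeff, hq i]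

end MonomialOrder

section Reduction

variable {ord : TermOrder n} {F : Set (MvPolynomial (Fin n) R)}

theorem isPowerProduct_iff_mem_closure {q : MvPolynomial (Fin n) R} :
    IsPowerProduct F q ↔ q ∈ Submonoid.closure F := by
  classical
  constructor
  · rintro ⟨e, he, rfl⟩
    exact prod_mem fun f hf => pow_mem (Submonoid.subset_closure (he hf)) _
  · intro hq
    induction hq using Submonoid.closure_induction with
    | mem f hf => exact ⟨Finsupp.single f 1, by simpa using hf, by simp⟩
    | one => exact ⟨0, by simp, by simp⟩
    | mul q q' _ _ ih ih' =>
      obtain ⟨e, he, rfl⟩ := ih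
      obtain ⟨e', he', rfl⟩ := ih'
      refine ⟨e + e', fun f hf => ?_, ?_⟩
      · exact (Finset.mem_union.mp (Finsupp.support_add hf)).elim (he ·) (he' ·)
      · rw [Finsupp.prod_add_index' (by simp) fun _ _ _ => pow_add _ _ _]

theorem SReduce.mem {A : Subalgebra R (MvPolynomial (Fin n) R)}
    (hFA : F ⊆ (A : Set (MvPolynomial (Fin n) R))) {g h : MvPolynomial (Fin n) R}
    (hred : SReduce ord F g h) (hg : g ∈ A) : h ∈ A := by
  induction hred with
  | refl => exact hg
  | tail _ hstep ih =>
    obtain ⟨β, N, q, r, -, hq, -, rfl⟩ := hstep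
    refine sub_mem ih (sum_mem fun i _ => mul_mem (A.algebraMap_mem (r i)) ?_)
    exact Submonoid.closure_le.mpr hFA (isPowerProduct_iff_mem_closure.mp (hq i).1)

theorem wellFounded_flip_sStep : WellFounded (flip (SStep ord F)) := by
  let m := ord.toMonomialOrder
  -- Coefficient vectors, read from the top monomial down, decrease lexicographically
  -- for the order in which only `0` lies below a nonzero coefficient.
  have hlex : WellFounded (Finsupp.Lex (fun a b => m.toSyn b < m.toSyn a)
      (fun x y : R => x = 0 ∧ y ≠ 0)) := by
    refine Finsupp.Lex.wellFounded (fun _ h => h.2 rfl)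
      ⟨fun y => ⟨y, fun x hx => ⟨x, fun z hz => absurd hx.1 hz.2⟩⟩⟩ ?_
    refine Subrelation.wf (fun {a b} h => ?_) (InvImage.wf m.toSyn wellFounded_lt)
    exact lt_of_le_of_ne (not_lt.mp h.1) (m.toSyn.injective.ne h.2)
  refine Subrelation.wf (fun {h g} hstep => ?_) (InvImage.wf AddMonoidAlgebra.coeff hlex)
  obtain ⟨β, N, q, r, hgβ, hq, hc, rfl⟩ := hstep
  simp only [ord.lp_eq_degree, ord.lc_eq_leadingCoeff] at hq hc
  have hdeg := m.degree_sum_C_mul_le (fun i => (hq i).2.2) r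
  refine ⟨β, fun γ hγ => ?_, ?_, hgβ⟩
  · show (g - _).coeff γ = g.coeff γ
    rw [coeff_sub, m.coeff_eq_zero_of_lt (lt_of_le_of_lt hdeg hγ), sub_zero]
  · show (g - _).coeff β = 0
    rw [coeff_sub, m.coeff_sum_C_mul_of_degree_eq (fun i => (hq i).2.2), ← hc, sub_self]

theorem exists_sReduce_forall_not_sStep (g : MvPolynomial (Fin n) R) :
    ∃ h, SReduce ord F g h ∧ ∀ h', ¬ SStep ord F h h' := by
  obtain ⟨h, hgh, hmin⟩ := wellFounded_flip_sStep.has_min {h | SReduce ord F g h} ⟨g, .refl⟩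
  exact ⟨h, hgh, fun h' hstep => hmin h' (Relation.ReflTransGen.tail hgh hstep) hstep⟩

variable [NoZeroDivisors R]

theorem ltm_mem_adjoin_of_isPowerProduct {q : MvPolynomial (Fin n) R} (hq : IsPowerProduct F q) :
    ord.ltm q ∈ Algebra.adjoin R (ord.ltm '' F) := by
  rw [ord.ltm_eq_leadingTerm, ← Subalgebra.mem_toSubmodule,
    ord.toMonomialOrder.adjoin_leadingTerm_eq_span]
  exact Submodule.subset_span ⟨q, isPowerProduct_iff_mem_closure.mp hq, rfl⟩

theorem SStep.ltm_eq_or_ltm_mem_adjoin {g h : MvPolynomial (Fin n) R} (hstep : SStep ord F g h) :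
    ord.ltm h = ord.ltm g ∨ ord.ltm g ∈ Algebra.adjoin R (ord.ltm '' F) := by
  let m := ord.toMonomialOrder
  obtain ⟨β, N, q, r, hgβ, hq, hc, rfl⟩ := hstep
  have hqβ : ∀ i, m.degree (q i) = β := fun i => ord.lp_eq_degree (q i) ▸ (hq i).2.2
  rcases (m.le_degree_of_mem_support (mem_support_iff.mpr hgβ)).lt_or_eq with hlt | heq
  · left
    have hdeg := lt_of_le_of_lt (m.degree_sum_C_mul_le hqβ r) hlt
    rw [ord.ltm_eq_leadingTerm, m.leadingTerm_eq_leadingTerm_iff]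
    exact ⟨m.leadingCoeff_sub_of_lt hdeg, m.degree_sub_of_lt hdeg⟩
  · right
    obtain rfl : β = m.degree g := m.toSyn.injective heq
    have hltm : ord.ltm g = ∑ i, r i • ord.ltm (q i) := by
      simp only [ord.lc_eq_leadingCoeff] at hc
      simp only [ord.ltm_eq_leadingTerm, MonomialOrder.leadingTerm]
      rw [MonomialOrder.leadingCoeff, hc, map_sum]
      exact Finset.sum_congr rfl fun i _ => by rw [smul_monomial, smul_eq_mul, hqβ i]
    rw [hltm]
    exact Subalgebra.sum_mem _ fun i _ =>
      Subalgebra.smul_mem _ (ltm_mem_adjoin_of_isPowerProduct (hq i).1) _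

theorem ltm_mem_adjoin_of_sReduce_zero {g : MvPolynomial (Fin n) R}
    (hred : SReduce ord F g 0) (hg : g ≠ 0) : ord.ltm g ∈ Algebra.adjoin R (ord.ltm '' F) := by
  induction hred using Relation.ReflTransGen.head_induction_on with
  | refl => exact absurd rfl hg
  | head hstep _ ih =>
    refine (SStep.ltm_eq_or_ltm_mem_adjoin hstep).elim (fun hltm => hltm ▸ ih ?_) id
    refine fun hc0 => hg (ord.ltm_eq_zero_iff.mp ?_)
    rw [← hltm, hc0, ord.ltm_eq_zero_iff]

theorem exists_sStep_of_ltm_mem_adjoin {h : MvPolynomial (Fin n) R} (hh : h ≠ 0)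
    (hmem : ord.ltm h ∈ Algebra.adjoin R (ord.ltm '' F)) : ∃ h', SStep ord F h h' := by
  let m := ord.toMonomialOrder
  rw [ord.ltm_eq_leadingTerm, ← Subalgebra.mem_toSubmodule, m.adjoin_leadingTerm_eq_span,
    MonomialOrder.leadingTerm] at hmem
  obtain ⟨N, q, r, hq, hc⟩ := m.exists_of_monomial_mem_span_leadingTerm hmem
  refine ⟨_, m.degree h, N, q, r, m.leadingCoeff_ne_zero_iff.mpr hh, fun i => ?_, ?_, rfl⟩
  · exact ⟨isPowerProduct_iff_mem_closure.mpr (hq i).1, (hq i).2.1,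
      by rw [ord.lp_eq_degree, (hq i).2.2]⟩
  · simp only [ord.lc_eq_leadingCoeff]
    exact hc

end Reduction

end

theorem isSAGBI_iff_final_sreductum_eq_zero_general {n : ℕ} {R : Type*} [CommRing R]
    [IsDomain R] (ord : TermOrder n)
    (A : Subalgebra R (MvPolynomial (Fin n) R)) (F : Set (MvPolynomial (Fin n) R))
    (hFA : F ⊆ (A : Set (MvPolynomial (Fin n) R))) :
    IsSAGBI ord A F ↔
      ∀ a ∈ A, a ≠ 0 → ∀ h : MvPolynomial (Fin n) R, SReduce ord F a h →
        (∀ h' : MvPolynomial (Fin n) R, ¬ SStep ord F h h') → h = 0 := by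
  constructor
  · intro hS a ha _ h hred hfinal
    by_contra hh
    have hmem : ord.ltm h ∈ Algebra.adjoin R (ord.ltm '' F) :=
      hS ▸ Algebra.subset_adjoin ⟨h, hred.mem hFA ha, rfl⟩
    obtain ⟨h', hstep⟩ := exists_sStep_of_ltm_mem_adjoin hh hmem
    exact hfinal h' hstep
  · intro hfinal
    refine le_antisymm (Algebra.adjoin_le ?_) (Algebra.adjoin_mono (Set.image_mono hFA))
    rintro _ ⟨a, ha, rfl⟩
    rcases eq_or_ne a 0 with rfl | ha0
    · rw [SetLike.mem_coe, ord.ltm_eq_zero_iff.mpr rfl]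
      exact zero_mem _
    obtain ⟨h, hred, hh⟩ := exists_sReduce_forall_not_sStep (ord := ord) (F := F) a
    obtain rfl := hfinal a ha ha0 h hred hh
    exact ltm_mem_adjoin_of_sReduce_zero hred ha0

/-- `F ⊆ A` is a SAGBI basis for `A` iff for every nonzero `a ∈ A`,
every final s-reductum of `a` via `F` is `0`. -/
theorem isSAGBI_iff_final_sreductum_eq_zero {n : ℕ} {R : Type*} [CommRing R]
    [IsDomain R] [IsNoetherianRing R] (ord : TermOrder n)
    (A : Subalgebra R (MvPolynomial (Fin n) R)) (F : Set (MvPolynomial (Fin n) R))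
    (hFA : F ⊆ (A : Set (MvPolynomial (Fin n) R))) :
    IsSAGBI ord A F ↔
      ∀ a ∈ A, a ≠ 0 → ∀ h : MvPolynomial (Fin n) R, SReduce ord F a h →
        (∀ h' : MvPolynomial (Fin n) R, ¬ SStep ord F h h') → h = 0 :=
  isSAGBI_iff_final_sreductum_eq_zero_general ord A F hFA
end

section
/- Suppose the R-subalgebra A of R[X] has a finite SAGBI basis. Then every ideal I of A has a finite SG-basis. -/
open MvPolynomial

variable {n : ℕ} {R : Type*} [CommRing R]

/-! Since `R[Lt A] = R[Lt F]` with `F` finite, `R[Lt A]` is a finitely generated algebra over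
the noetherian ring `R`, hence noetherian by Hilbert's basis theorem. So the ideal `⟨Lt I⟩` is
generated by finitely many of its generators `lt(g)`, `g ∈ I`, and these `g` form an SG-basis. -/

theorem Ideal.exists_finite_subset_span_image_eq {α S : Type*} [CommSemiring S]
    [IsNoetherianRing S] (f : α → S) (s : Set α) :
    ∃ t ⊆ s, t.Finite ∧ Ideal.span (f '' t) = Ideal.span (f '' s) := by
  obtain ⟨t, hts, hspan⟩ :=
    (Submodule.fg_span_iff_fg_span_finset_subset (R := S) (f '' s)).1
      (IsNoetherian.noetherian _)
  refine Set.exists_subset_image_finite_and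
    (p := fun u => Ideal.span u = Ideal.span (f '' s)) |>.1 ?_
  exact ⟨t, hts, t.finite_toSet, hspan.symm⟩

section SGBasis

variable (ord : TermOrder n) (A : Subalgebra R (MvPolynomial (Fin n) R))

theorem isNoetherianRing_ltAlg [IsNoetherianRing R] {F : Set (MvPolynomial (Fin n) R)}
    (hF : F.Finite) (hS : IsSAGBI ord A F) : IsNoetherianRing (LtAlg ord A) :=
  isNoetherianRing_of_fg (Subalgebra.fg_def.2 ⟨ord.ltm '' F, hF.image _, hS.symm⟩)

theorem preimage_ltm_image_eq_image_ltA (G : Set A) :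
    (Subtype.val ⁻¹' (ord.ltm '' (Subtype.val '' G)) : Set (LtAlg ord A)) = ltA ord A '' G := by
  ext x
  constructor
  · rintro ⟨-, ⟨a, ha, rfl⟩, hx⟩
    exact ⟨a, ha, Subtype.ext hx⟩
  · rintro ⟨a, ha, rfl⟩
    exact ⟨a, ⟨a, ha, rfl⟩, rfl⟩

theorem isSGBasis_iff (I : Ideal A) (G : Set A) :
    IsSGBasis ord A I G ↔ Ideal.span (ltA ord A '' G) = Ideal.span (ltA ord A '' I) := by
  rw [IsSGBasis, preimage_ltm_image_eq_image_ltA, preimage_ltm_image_eq_image_ltA]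

end SGBasis

theorem exists_finite_sgbasis_general {n : ℕ} {R : Type*} [CommRing R]
    [IsNoetherianRing R] (ord : TermOrder n)
    (A : Subalgebra R (MvPolynomial (Fin n) R))
    (hfin : ∃ F : Set (MvPolynomial (Fin n) R),
      F.Finite ∧ F ⊆ (A : Set (MvPolynomial (Fin n) R)) ∧ IsSAGBI ord A F) :
    ∀ I : Ideal A, ∃ G : Set A, G.Finite ∧ G ⊆ (I : Set A) ∧ IsSGBasis ord A I G := by
  obtain ⟨F, hF, -, hS⟩ := hfin
  have := isNoetherianRing_ltAlg ord A hF hS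
  intro I
  obtain ⟨G, hGI, hG, hspan⟩ := Ideal.exists_finite_subset_span_image_eq (ltA ord A) (I : Set A)
  exact ⟨G, hG, hGI, (isSGBasis_iff ord A I G).2 hspan⟩

/-- if `A` has a finite SAGBI basis, then every ideal of `A`
has a finite SG-basis. -/
theorem exists_finite_sgbasis {n : ℕ} {R : Type*} [CommRing R] [IsDomain R]
    [IsNoetherianRing R] (ord : TermOrder n)
    (A : Subalgebra R (MvPolynomial (Fin n) R))
    (hfin : ∃ F : Set (MvPolynomial (Fin n) R),
      F.Finite ∧ F ⊆ (A : Set (MvPolynomial (Fin n) R)) ∧ IsSAGBI ord A F) :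
    ∀ I : Ideal A, ∃ G : Set A, G.Finite ∧ G ⊆ (I : Set A) ∧ IsSGBasis ord A I G :=
  exists_finite_sgbasis_general ord A hfin
end
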